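/- arXiv:2512.05215 — 3 statements merged into one kernel-verified Lean document; each statement's English description precedes it below -/
import Mathlib

section
/- Let V_1, …, V_e be finite-dimensional vector spaces over a field k and T ∈ V_1 ⊗ ⋯ ⊗ V_e a tensor. The centroid Cen(T), defined as the set of tuples (X_1,…,X_e) ∈ End(V_1) × ⋯ × End(V_e) with X_1 ∘_1 T = X_2 ∘_2 T = ⋯ = X_e ∘_e T, is a linear subspace of End(V_1) × ⋯ × End(V_e) containing the identity tuple (Id, …, Id), and it is closed under composition when e ≥ 3 and T is concise (hence a unital subalgebra). -/
open TensorProduct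

variable {k : Type*} [Field k] {V1 V2 V3 : Type*}
  [AddCommGroup V1] [Module k V1] [AddCommGroup V2] [Module k V2]
  [AddCommGroup V3] [Module k V3]
  [FiniteDimensional k V1] [FiniteDimensional k V2] [FiniteDimensional k V3]

/-- Application of an endomorphism on the first tensor factor. -/
noncomputable def app1 (X : Module.End k V1) :
    (V1 ⊗[k] V2) ⊗[k] V3 →ₗ[k] (V1 ⊗[k] V2) ⊗[k] V3 :=
  TensorProduct.map (TensorProduct.map X LinearMap.id) LinearMap.id

/-- Application of an endomorphism on the second tensor factor. -/
noncomputable def app2 (Y : Module.End k V2) :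
    (V1 ⊗[k] V2) ⊗[k] V3 →ₗ[k] (V1 ⊗[k] V2) ⊗[k] V3 :=
  TensorProduct.map (TensorProduct.map LinearMap.id Y) LinearMap.id

/-- Application of an endomorphism on the third tensor factor. -/
noncomputable def app3 (Z : Module.End k V3) :
    (V1 ⊗[k] V2) ⊗[k] V3 →ₗ[k] (V1 ⊗[k] V2) ⊗[k] V3 :=
  TensorProduct.map (TensorProduct.map LinearMap.id LinearMap.id) Z

/-- The centroid of a tensor `T ∈ V1 ⊗ V2 ⊗ V3`: tuples of endomorphisms acting
equally on each factor. -/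
noncomputable def Cen (T : (V1 ⊗[k] V2) ⊗[k] V3) :
    Set (Module.End k V1 × Module.End k V2 × Module.End k V3) :=
  {c | app1 c.1 T = app2 c.2.1 T ∧ app2 c.2.1 T = app3 c.2.2 T}

/-- A tensor is concise if it lies in no product of subspaces with at least one proper. -/
def Concise (T : (V1 ⊗[k] V2) ⊗[k] V3) : Prop :=
  ∀ (W1 : Submodule k V1) (W2 : Submodule k V2) (W3 : Submodule k V3),
    T ∈ LinearMap.range
      (TensorProduct.map (TensorProduct.map W1.subtype W2.subtype) W3.subtype) →
    W1 = ⊤ ∧ W2 = ⊤ ∧ W3 = ⊤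

/-!
The three factors act on `V1 ⊗ V2 ⊗ V3` through algebra homomorphisms `φᵢ : End(Vᵢ) → End(V1 ⊗ V2 ⊗ V3)`
whose images commute pairwise, and `Cen T` consists of the `b` with `φ₁ b₁ T = φ₂ b₂ T = φ₃ b₃ T`.
These are linear conditions satisfied by `1`. For `a, b ∈ Cen T` a third factor serves as an
intermediary:
`a₁b₁ · T = a₁b₃ · T = b₃a₁ · T = b₃a₂ · T = a₂b₃ · T = a₂b₂ · T`,
and likewise with `b₁` for the second equality.
-/

theorem mul_smul_eq_mul_smul_of_commute {M α : Type*} [Monoid M] [MulAction M α]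
    {f f' g g' h : M} {t : α} (hf : f • t = f' • t) (hg : g • t = h • t) (hg' : g' • t = h • t)
    (hfh : Commute f h) (hf'h : Commute f' h) : (f * g) • t = (f' * g') • t := by
  rw [mul_smul, mul_smul, hg, hg', ← mul_smul, hfh.eq, mul_smul, hf, ← mul_smul, ← hf'h.eq,
    mul_smul]

theorem LinearMap.commute_rTensor_lTensor {R M N : Type*} [CommSemiring R]
    [AddCommMonoid M] [Module R M] [AddCommMonoid N] [Module R N]
    (f : Module.End R M) (g : Module.End R N) : Commute (f.rTensor N) (g.lTensor M) :=
  (rTensor_comp_lTensor _ f g).trans (lTensor_comp_rTensor _ f g).symm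

section Centroid

variable {R W B₁ B₂ B₃ : Type*} [CommSemiring R] [AddCommMonoid W] [Module R W]
  [Semiring B₁] [Algebra R B₁] [Semiring B₂] [Algebra R B₂] [Semiring B₃] [Algebra R B₃]
  (φ₁ : B₁ →ₐ[R] Module.End R W) (φ₂ : B₂ →ₐ[R] Module.End R W) (φ₃ : B₃ →ₐ[R] Module.End R W)
  (t : W)

def centroid : Submodule R (B₁ × B₂ × B₃) where
  carrier := {b | φ₁ b.1 t = φ₂ b.2.1 t ∧ φ₂ b.2.1 t = φ₃ b.2.2 t}
  add_mem' := by
    rintro a b ⟨ha₁, ha₂⟩ ⟨hb₁, hb₂⟩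
    constructor <;> simp only [Prod.fst_add, Prod.snd_add, map_add, LinearMap.add_apply, *]
  zero_mem' := by simp
  smul_mem' := by
    rintro c b ⟨hb₁, hb₂⟩
    constructor <;> simp only [Prod.smul_fst, Prod.smul_snd, map_smul, LinearMap.smul_apply, *]

variable {φ₁ φ₂ φ₃ t}

theorem mem_centroid {b : B₁ × B₂ × B₃} :
    b ∈ centroid φ₁ φ₂ φ₃ t ↔ φ₁ b.1 t = φ₂ b.2.1 t ∧ φ₂ b.2.1 t = φ₃ b.2.2 t :=
  Iff.rfl

theorem one_mem_centroid : 1 ∈ centroid φ₁ φ₂ φ₃ t := by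
  simp [mem_centroid]

theorem mul_mem_centroid (h₁₂ : ∀ x y, Commute (φ₁ x) (φ₂ y)) (h₁₃ : ∀ x z, Commute (φ₁ x) (φ₃ z))
    (h₂₃ : ∀ y z, Commute (φ₂ y) (φ₃ z)) {a b : B₁ × B₂ × B₃}
    (ha : a ∈ centroid φ₁ φ₂ φ₃ t) (hb : b ∈ centroid φ₁ φ₂ φ₃ t) :
    a * b ∈ centroid φ₁ φ₂ φ₃ t := by
  rw [mem_centroid] at ha hb ⊢
  simp only [Prod.fst_mul, Prod.snd_mul, map_mul]
  exact ⟨mul_smul_eq_mul_smul_of_commute ha.1 (hb.1.trans hb.2) hb.2 (h₁₃ _ _) (h₂₃ _ _),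
    mul_smul_eq_mul_smul_of_commute ha.2 hb.1.symm (hb.1.trans hb.2).symm
      (h₁₂ _ _).symm (h₁₃ _ _).symm⟩

end Centroid

open Module.End in
noncomputable def tensorCentroid (T : (V1 ⊗[k] V2) ⊗[k] V3) :
    Subalgebra k (Module.End k V1 × Module.End k V2 × Module.End k V3) :=
  let φ₁ := (rTensorAlgHom k (V1 ⊗[k] V2) V3).comp (rTensorAlgHom k V1 V2)
  let φ₂ := (rTensorAlgHom k (V1 ⊗[k] V2) V3).comp (lTensorAlgHom k V2 V1)
  let φ₃ := lTensorAlgHom k V3 (V1 ⊗[k] V2)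
  have h₁₂ (x y) : Commute (φ₁ x) (φ₂ y) :=
    (LinearMap.commute_rTensor_lTensor x y).map (rTensorAlgHom k (V1 ⊗[k] V2) V3)
  have h₁₃ (x z) : Commute (φ₁ x) (φ₃ z) := LinearMap.commute_rTensor_lTensor _ z
  have h₂₃ (y z) : Commute (φ₂ y) (φ₃ z) := LinearMap.commute_rTensor_lTensor _ z
  -- `copy` makes membership in `tensorCentroid T` definitionally membership in `Cen T`.
  ((centroid φ₁ φ₂ φ₃ T).toSubalgebra one_mem_centroid
    (fun _ _ => mul_mem_centroid h₁₂ h₁₃ h₂₃)).copy (Cen T) <| by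
      ext ⟨X, Y, Z⟩
      simp only [Cen, app3, TensorProduct.map_id]
      rfl

/-- The centroid of a tensor is a linear subspace containing the identity tuple,
and (for concise `T`) is closed under multiplication, hence a unital subalgebra. -/
theorem stmt_6 (T : (V1 ⊗[k] V2) ⊗[k] V3) :
    (1, 1, 1) ∈ Cen T ∧
    (∀ a b, a ∈ Cen T → b ∈ Cen T → a + b ∈ Cen T) ∧
    (∀ (c : k) a, a ∈ Cen T → c • a ∈ Cen T) ∧
    (Concise T → ∀ a b, a ∈ Cen T → b ∈ Cen T → a * b ∈ Cen T) := by
  let S := tensorCentroid T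
  exact ⟨S.one_mem, fun _ _ => S.add_mem, fun c _ ha => S.smul_mem ha c,
    fun _ _ _ => S.mul_mem⟩
end

section
/- Let T ∈ V_1 ⊗ V_2 ⊗ V_3 be a concise tensor and let (X_1, X_2, X_3), (Y_1, Y_2, Y_3) be two elements of the centroid Cen(T). Then X_1 Y_1 ∘_1 T = X_2 Y_2 ∘_2 T = X_3 Y_3 ∘_3 T and moreover X_i Y_i = Y_i X_i on each factor; hence Cen(T) is a commutative algebra. -/
/-! Write `a_i`, `b_i` for the actions of `X_i`, `Y_i` on the `i`-th factor. For `i ≠ j`,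
`a_i b_i T = a_i b_j T = b_j a_i T = b_j a_j T`, because actions on distinct factors commute.
Five such equalities link all six values `a_i b_i T`, `b_i a_i T`, so they coincide; in particular
`(X_i Y_i - Y_i X_i) ∘_i T = 0`. By flatness, `Z ∘_1 T = 0` puts `T` in `ker Z ⊗ V_2 ⊗ V_3`, so
conciseness forces `Z = 0`, and likewise on the other factors. -/

open TensorProduct

variable {k : Type*} [Field k] {V1 V2 V3 : Type*}
  [AddCommGroup V1] [Module k V1] [AddCommGroup V2] [Module k V2]
  [AddCommGroup V3] [Module k V3]
  [FiniteDimensional k V1] [FiniteDimensional k V2] [FiniteDimensional k V3]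

theorem Commute.mul_apply_eq_of_apply_eq {R M : Type*} [Semiring R] [AddCommMonoid M]
    [Module R M] {a a' b b' : Module.End R M} {t : M} (h : Commute a b')
    (ha : a t = a' t) (hb : b t = b' t) : (a * b) t = (b' * a') t :=
  calc (a * b) t = (a * b') t := by rw [Module.End.mul_apply, hb, Module.End.mul_apply]
    _ = b' (a t) := by rw [h.eq, Module.End.mul_apply]
    _ = (b' * a') t := by rw [ha, Module.End.mul_apply]

section Tensor

open LinearMap

variable {K E₁ E₂ E₃ : Type*} [Field K] [AddCommGroup E₁] [Module K E₁]
  [AddCommGroup E₂] [Module K E₂] [AddCommGroup E₃] [Module K E₃]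

theorem app1_eq_rTensor (X : Module.End K E₁) :
    (app1 X : (E₁ ⊗[K] E₂) ⊗[K] E₃ →ₗ[K] _) = (X.rTensor E₂).rTensor E₃ :=
  rfl

theorem app2_eq_rTensor_lTensor (Y : Module.End K E₂) :
    (app2 Y : (E₁ ⊗[K] E₂) ⊗[K] E₃ →ₗ[K] _) = (Y.lTensor E₁).rTensor E₃ :=
  rfl

theorem app3_eq_lTensor (Z : Module.End K E₃) :
    (app3 Z : (E₁ ⊗[K] E₂) ⊗[K] E₃ →ₗ[K] _) = Z.lTensor (E₁ ⊗[K] E₂) := by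
  rw [app3, TensorProduct.map_id]
  rfl

theorem app1_mul (A B : Module.End K E₁) :
    (app1 (A * B) : (E₁ ⊗[K] E₂) ⊗[K] E₃ →ₗ[K] _) = app1 A * app1 B := by
  simp only [app1_eq_rTensor, rTensor_mul]

theorem app2_mul (A B : Module.End K E₂) :
    (app2 (A * B) : (E₁ ⊗[K] E₂) ⊗[K] E₃ →ₗ[K] _) = app2 A * app2 B := by
  simp only [app2_eq_rTensor_lTensor, lTensor_mul, rTensor_mul]

theorem app3_mul (A B : Module.End K E₃) :
    (app3 (A * B) : (E₁ ⊗[K] E₂) ⊗[K] E₃ →ₗ[K] _) = app3 A * app3 B := by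
  simp only [app3_eq_lTensor, lTensor_mul]

theorem app1_sub (A B : Module.End K E₁) :
    (app1 (A - B) : (E₁ ⊗[K] E₂) ⊗[K] E₃ →ₗ[K] _) = app1 A - app1 B := by
  simp only [app1_eq_rTensor, rTensor_sub]

theorem app2_sub (A B : Module.End K E₂) :
    (app2 (A - B) : (E₁ ⊗[K] E₂) ⊗[K] E₃ →ₗ[K] _) = app2 A - app2 B := by
  simp only [app2_eq_rTensor_lTensor, lTensor_sub, rTensor_sub]

theorem app3_sub (A B : Module.End K E₃) :
    (app3 (A - B) : (E₁ ⊗[K] E₂) ⊗[K] E₃ →ₗ[K] _) = app3 A - app3 B := by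
  simp only [app3_eq_lTensor, lTensor_sub]

theorem commute_app1_app2 (A : Module.End K E₁) (B : Module.End K E₂) :
    Commute (app1 A : (E₁ ⊗[K] E₂) ⊗[K] E₃ →ₗ[K] _) (app2 B) := by
  simp only [Commute, SemiconjBy, app1_eq_rTensor, app2_eq_rTensor_lTensor,
    Module.End.mul_eq_comp, ← rTensor_comp, rTensor_comp_lTensor, lTensor_comp_rTensor]

theorem commute_app1_app3 (A : Module.End K E₁) (C : Module.End K E₃) :
    Commute (app1 A : (E₁ ⊗[K] E₂) ⊗[K] E₃ →ₗ[K] _) (app3 C) := by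
  simp only [Commute, SemiconjBy, app1_eq_rTensor, app3_eq_lTensor, Module.End.mul_eq_comp,
    rTensor_comp_lTensor, lTensor_comp_rTensor]

theorem commute_app2_app3 (B : Module.End K E₂) (C : Module.End K E₃) :
    Commute (app2 B : (E₁ ⊗[K] E₂) ⊗[K] E₃ →ₗ[K] _) (app3 C) := by
  simp only [Commute, SemiconjBy, app2_eq_rTensor_lTensor, app3_eq_lTensor,
    Module.End.mul_eq_comp, rTensor_comp_lTensor, lTensor_comp_rTensor]

namespace Concise

variable {T : (E₁ ⊗[K] E₂) ⊗[K] E₃}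

theorem range_eq_top_of_mem_range (hT : Concise T) {M₁ M₂ M₃ : Type*}
    [AddCommGroup M₁] [Module K M₁] [AddCommGroup M₂] [Module K M₂]
    [AddCommGroup M₃] [Module K M₃] (f₁ : M₁ →ₗ[K] E₁) (f₂ : M₂ →ₗ[K] E₂) (f₃ : M₃ →ₗ[K] E₃)
    (h : T ∈ LinearMap.range (TensorProduct.map (TensorProduct.map f₁ f₂) f₃)) :
    LinearMap.range f₁ = ⊤ ∧ LinearMap.range f₂ = ⊤ ∧ LinearMap.range f₃ = ⊤ := by
  refine hT _ _ _ (LinearMap.range_comp_le_range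
    (TensorProduct.map (TensorProduct.map f₁.rangeRestrict f₂.rangeRestrict) f₃.rangeRestrict) _ ?_)
  rwa [← TensorProduct.map_comp, ← TensorProduct.map_comp]

theorem eq_zero_of_app1_eq_zero (hT : Concise T) {Z : Module.End K E₁} (hZ : app1 Z T = 0) :
    Z = 0 := by
  have hT' := (Module.Flat.rTensor_exact E₃ (Module.Flat.rTensor_exact E₂
    Z.exact_subtype_ker_map) T).mp hZ
  obtain ⟨hker, -, -⟩ := hT.range_eq_top_of_mem_range _ _ _ hT'
  rwa [Submodule.range_subtype, LinearMap.ker_eq_top] at hker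

theorem eq_zero_of_app2_eq_zero (hT : Concise T) {Z : Module.End K E₂} (hZ : app2 Z T = 0) :
    Z = 0 := by
  have hT' := (Module.Flat.rTensor_exact E₃ (Module.Flat.lTensor_exact E₁
    Z.exact_subtype_ker_map) T).mp hZ
  obtain ⟨-, hker, -⟩ := hT.range_eq_top_of_mem_range _ _ _ hT'
  rwa [Submodule.range_subtype, LinearMap.ker_eq_top] at hker

theorem eq_zero_of_app3_eq_zero (hT : Concise T) {Z : Module.End K E₃} (hZ : app3 Z T = 0) :
    Z = 0 := by
  have hT' := (Module.Flat.lTensor_exact (E₁ ⊗[K] E₂) Z.exact_subtype_ker_map T).mp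
    (by rwa [← app3_eq_lTensor])
  rw [LinearMap.lTensor, ← TensorProduct.map_id] at hT'
  obtain ⟨-, -, hker⟩ := hT.range_eq_top_of_mem_range _ _ _ hT'
  rwa [Submodule.range_subtype, LinearMap.ker_eq_top] at hker

theorem eq_of_app1_eq (hT : Concise T) {A B : Module.End K E₁} (h : app1 A T = app1 B T) :
    A = B :=
  sub_eq_zero.mp <| hT.eq_zero_of_app1_eq_zero <| by
    rw [app1_sub, LinearMap.sub_apply, h, sub_self]

theorem eq_of_app2_eq (hT : Concise T) {A B : Module.End K E₂} (h : app2 A T = app2 B T) :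
    A = B :=
  sub_eq_zero.mp <| hT.eq_zero_of_app2_eq_zero <| by
    rw [app2_sub, LinearMap.sub_apply, h, sub_self]

theorem eq_of_app3_eq (hT : Concise T) {A B : Module.End K E₃} (h : app3 A T = app3 B T) :
    A = B :=
  sub_eq_zero.mp <| hT.eq_zero_of_app3_eq_zero <| by
    rw [app3_sub, LinearMap.sub_apply, h, sub_self]

end Concise

end Tensor

/-- The centroid of a concise tensor is closed under multiplication and is commutative. -/
theorem stmt_8 (T : (V1 ⊗[k] V2) ⊗[k] V3) (hT : Concise T)
    (X Y : Module.End k V1 × Module.End k V2 × Module.End k V3)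
    (hX : X ∈ Cen T) (hY : Y ∈ Cen T) :
    (app1 (X.1 * Y.1) T = app2 (X.2.1 * Y.2.1) T ∧
      app2 (X.2.1 * Y.2.1) T = app3 (X.2.2 * Y.2.2) T) ∧
    X.1 * Y.1 = Y.1 * X.1 ∧ X.2.1 * Y.2.1 = Y.2.1 * X.2.1 ∧ X.2.2 * Y.2.2 = Y.2.2 * X.2.2 := by
  obtain ⟨hX₁₂, hX₂₃⟩ := hX
  obtain ⟨hY₁₂, hY₂₃⟩ := hY
  have h₁₂ : app1 (X.1 * Y.1) T = app2 (Y.2.1 * X.2.1) T := by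
    simpa only [app1_mul, app2_mul] using
      (commute_app1_app2 X.1 Y.2.1).mul_apply_eq_of_apply_eq hX₁₂ hY₁₂
  have h₃₂ : app3 (X.2.2 * Y.2.2) T = app2 (Y.2.1 * X.2.1) T := by
    simpa only [app3_mul, app2_mul] using
      (commute_app2_app3 Y.2.1 X.2.2).symm.mul_apply_eq_of_apply_eq hX₂₃.symm hY₂₃.symm
  have h₃₁ : app3 (X.2.2 * Y.2.2) T = app1 (Y.1 * X.1) T := by
    simpa only [app3_mul, app1_mul] using
      (commute_app1_app3 Y.1 X.2.2).symm.mul_apply_eq_of_apply_eq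
        (hX₁₂.trans hX₂₃).symm (hY₁₂.trans hY₂₃).symm
  have h₂₁ : app2 (X.2.1 * Y.2.1) T = app1 (Y.1 * X.1) T := by
    simpa only [app2_mul, app1_mul] using
      (commute_app1_app2 Y.1 X.2.1).symm.mul_apply_eq_of_apply_eq hX₁₂.symm hY₁₂.symm
  have h₂₃ : app2 (X.2.1 * Y.2.1) T = app3 (Y.2.2 * X.2.2) T := by
    simpa only [app2_mul, app3_mul] using
      (commute_app2_app3 X.2.1 Y.2.2).mul_apply_eq_of_apply_eq hX₂₃ hY₂₃
  refine ⟨⟨h₁₂.trans (h₃₂.symm.trans (h₃₁.trans h₂₁.symm)), h₂₁.trans h₃₁.symm⟩,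
    hT.eq_of_app1_eq (h₁₂.trans (h₃₂.symm.trans h₃₁)),
    hT.eq_of_app2_eq (h₂₁.trans (h₃₁.symm.trans h₃₂)),
    hT.eq_of_app3_eq (h₃₁.trans (h₂₁.symm.trans h₂₃))⟩
end

section
/- Let T ∈ V_1 ⊗ ⋯ ⊗ V_e be a concise tensor (e ≥ 3) and suppose (X_1, …, X_e) ∈ Cen(T) is a nonzero idempotent tuple different from the identity: (X_1,…,X_e)² = (X_1,…,X_e). Then each X_i is a projection, and setting V_{i,1} = im X_i, V_{i,2} = im(Id − X_i), one has V_i = V_{i,1} ⊕ V_{i,2}, and T = T_1 + T_2 with T_1 = X_1 ∘_1 T ∈ V_{1,1} ⊗ ⋯ ⊗ V_{e,1} and T_2 = (Id − X_1) ∘_1 T ∈ V_{1,2} ⊗ ⋯ ⊗ V_{e,2}. -/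
/-!
The three factors act on `T` through commuting copies of `End Vᵢ`. Since all `Xᵢ` act on `T`
alike and `X₁` is idempotent, `T₁ = X₁ ∘₁ T` is fixed by every `Xᵢ ∘ᵢ`, hence lies in the
product of the images `im Xᵢ`. The tuple `(1 - Xᵢ)ᵢ` is again an idempotent of the centroid,
and the same argument applied to it places `T₂ = T - T₁`.
-/

open TensorProduct

variable {k : Type*} [Field k] {V1 V2 V3 : Type*}
  [AddCommGroup V1] [Module k V1] [AddCommGroup V2] [Module k V2]
  [AddCommGroup V3] [Module k V3]
  [FiniteDimensional k V1] [FiniteDimensional k V2] [FiniteDimensional k V3]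

section

variable {R : Type*} {M N P : Type*}

theorem LinearMap.IsIdempotentElem.isCompl_range_range_one_sub [Ring R] [AddCommGroup M]
    [Module R M] {p : Module.End R M} (hp : IsIdempotentElem p) :
    IsCompl (LinearMap.range p) (LinearMap.range (1 - p)) :=
  ker_eq_range_one_sub hp ▸ isCompl hp

theorem TensorProduct.mem_range_map_map_subtype_of_map_map_apply_eq_self [CommSemiring R]
    [AddCommMonoid M] [Module R M] [AddCommMonoid N] [Module R N] [AddCommMonoid P] [Module R P]
    {f : Module.End R M} {g : Module.End R N} {h : Module.End R P} {t : (M ⊗[R] N) ⊗[R] P}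
    (ht : map (map f g) h t = t) :
    t ∈ LinearMap.range
      (map (map (LinearMap.range f).subtype (LinearMap.range g).subtype)
        (LinearMap.range h).subtype) :=
  ⟨map (map f.rangeRestrict g.rangeRestrict) h.rangeRestrict t, by
    rw [← LinearMap.comp_apply, ← map_comp, ← map_comp, LinearMap.subtype_comp_codRestrict,
      LinearMap.subtype_comp_codRestrict, LinearMap.subtype_comp_codRestrict, ht]⟩

end

section

variable {K : Type*} [Field K] {U₁ U₂ U₃ : Type*} [AddCommGroup U₁] [Module K U₁]
  [AddCommGroup U₂] [Module K U₂] [AddCommGroup U₃] [Module K U₃]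

theorem app1_mul_s9 (A B : Module.End K U₁) :
    app1 (V2 := U₂) (V3 := U₃) (A * B) = app1 A * app1 B := by
  ext x y z
  simp [app1]

theorem app1_one_sub (A : Module.End K U₁) :
    app1 (V2 := U₂) (V3 := U₃) (1 - A) = 1 - app1 A := by
  ext x y z
  simp [app1, sub_tmul]

theorem app2_one_sub (B : Module.End K U₂) :
    app2 (V1 := U₁) (V3 := U₃) (1 - B) = 1 - app2 B := by
  ext x y z
  simp [app2, tmul_sub, sub_tmul]

theorem app3_one_sub (C : Module.End K U₃) :
    app3 (V1 := U₁) (V2 := U₂) (1 - C) = 1 - app3 C := by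
  ext x y z
  simp [app3, tmul_sub]

theorem app1_commute_app2 (A : Module.End K U₁) (B : Module.End K U₂) :
    Commute (app1 (V3 := U₃) A) (app2 B) := by
  ext x y z
  simp [app1, app2]

theorem app1_commute_app3 (A : Module.End K U₁) (C : Module.End K U₃) :
    Commute (app1 (V2 := U₂) A) (app3 C) := by
  ext x y z
  simp [app1, app3]

theorem app1_mul_app2_mul_app3 (A : Module.End K U₁) (B : Module.End K U₂)
    (C : Module.End K U₃) : app1 A * app2 B * app3 C = map (map A B) C := by
  ext x y z
  simp [app1, app2, app3]

theorem one_sub_mem_Cen {T : (U₁ ⊗[K] U₂) ⊗[K] U₃}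
    {c : Module.End K U₁ × Module.End K U₂ × Module.End K U₃} (hc : c ∈ Cen T) :
    (1 - c.1, 1 - c.2.1, 1 - c.2.2) ∈ Cen T := by
  obtain ⟨h12, h23⟩ := hc
  simp only [Cen, Set.mem_ofPred_eq, app1_one_sub, app2_one_sub, app3_one_sub,
    LinearMap.sub_apply, Module.End.one_apply, h12, h23, and_self]

theorem app1_mem_range_of_mem_Cen {T : (U₁ ⊗[K] U₂) ⊗[K] U₃}
    {c : Module.End K U₁ × Module.End K U₂ × Module.End K U₃} (hc : c ∈ Cen T)
    (hc₁ : IsIdempotentElem c.1) :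
    app1 c.1 T ∈ LinearMap.range
      (map (map (LinearMap.range c.1).subtype (LinearMap.range c.2.1).subtype)
        (LinearMap.range c.2.2).subtype) := by
  obtain ⟨h12, h23⟩ := hc
  have hfix₁ : app1 c.1 (app1 c.1 T) = app1 c.1 T := by
    rw [← Module.End.mul_apply, ← app1_mul_s9, hc₁.eq]
  have hfix₂ : app2 c.2.1 (app1 c.1 T) = app1 c.1 T := by
    rw [← Module.End.mul_apply, ← (app1_commute_app2 _ _).eq, Module.End.mul_apply, ← h12, hfix₁]
  have hfix₃ : app3 c.2.2 (app1 c.1 T) = app1 c.1 T := by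
    rw [← Module.End.mul_apply, ← (app1_commute_app3 _ _).eq, Module.End.mul_apply,
      ← h12.trans h23, hfix₁]
  apply mem_range_map_map_subtype_of_map_map_apply_eq_self
  rw [← app1_mul_app2_mul_app3, Module.End.mul_apply, Module.End.mul_apply, hfix₃, hfix₂, hfix₁]

end

theorem stmt_9_general (T : (V1 ⊗[k] V2) ⊗[k] V3)
    (X : Module.End k V1 × Module.End k V2 × Module.End k V3)
    (hX : X ∈ Cen T) (hidem : X * X = X) :
    (X.1 * X.1 = X.1 ∧ X.2.1 * X.2.1 = X.2.1 ∧ X.2.2 * X.2.2 = X.2.2) ∧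
    (IsCompl (LinearMap.range X.1) (LinearMap.range (1 - X.1)) ∧
      IsCompl (LinearMap.range X.2.1) (LinearMap.range (1 - X.2.1)) ∧
      IsCompl (LinearMap.range X.2.2) (LinearMap.range (1 - X.2.2))) ∧
    T = app1 X.1 T + app1 (1 - X.1) T ∧
    app1 X.1 T ∈ LinearMap.range
      (TensorProduct.map
        (TensorProduct.map (LinearMap.range X.1).subtype (LinearMap.range X.2.1).subtype)
        (LinearMap.range X.2.2).subtype) ∧
    app1 (1 - X.1) T ∈ LinearMap.range
      (TensorProduct.map
        (TensorProduct.map (LinearMap.range (1 - X.1)).subtype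
          (LinearMap.range (1 - X.2.1)).subtype)
        (LinearMap.range (1 - X.2.2)).subtype) := by
  obtain ⟨hX₁, hX₂, hX₃⟩ :
      IsIdempotentElem X.1 ∧ IsIdempotentElem X.2.1 ∧ IsIdempotentElem X.2.2 := by
    simpa only [IsIdempotentElem, Prod.ext_iff, Prod.fst_mul, Prod.snd_mul] using hidem
  have hT₂ := app1_mem_range_of_mem_Cen (one_sub_mem_Cen hX) hX₁.one_sub
  refine ⟨⟨hX₁, hX₂, hX₃⟩,
    ⟨LinearMap.IsIdempotentElem.isCompl_range_range_one_sub hX₁,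
      LinearMap.IsIdempotentElem.isCompl_range_range_one_sub hX₂,
      LinearMap.IsIdempotentElem.isCompl_range_range_one_sub hX₃⟩,
    ?_, app1_mem_range_of_mem_Cen hX hX₁, hT₂⟩
  rw [app1_one_sub, LinearMap.sub_apply, Module.End.one_apply, add_sub_cancel]

/-- An idempotent tuple in the centroid of a concise tensor yields a direct sum
decomposition `T = T₁ + T₂` along the images of the projections. -/
theorem stmt_9 (T : (V1 ⊗[k] V2) ⊗[k] V3) (hT : Concise T)
    (X : Module.End k V1 × Module.End k V2 × Module.End k V3)
    (hX : X ∈ Cen T) (hidem : X * X = X) (hne0 : X ≠ 0) (hne1 : X ≠ 1) :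
    (X.1 * X.1 = X.1 ∧ X.2.1 * X.2.1 = X.2.1 ∧ X.2.2 * X.2.2 = X.2.2) ∧
    (IsCompl (LinearMap.range X.1) (LinearMap.range (1 - X.1)) ∧
      IsCompl (LinearMap.range X.2.1) (LinearMap.range (1 - X.2.1)) ∧
      IsCompl (LinearMap.range X.2.2) (LinearMap.range (1 - X.2.2))) ∧
    T = app1 X.1 T + app1 (1 - X.1) T ∧
    app1 X.1 T ∈ LinearMap.range
      (TensorProduct.map
        (TensorProduct.map (LinearMap.range X.1).subtype (LinearMap.range X.2.1).subtype)
        (LinearMap.range X.2.2).subtype) ∧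
    app1 (1 - X.1) T ∈ LinearMap.range
      (TensorProduct.map
        (TensorProduct.map (LinearMap.range (1 - X.1)).subtype
          (LinearMap.range (1 - X.2.1)).subtype)
        (LinearMap.range (1 - X.2.2)).subtype) :=
  stmt_9_general T X hX hidem
end
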